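/- Let w be an orthogonal transformation of ℝ^n that is an orthogonal direct sum of rotations on 2-dimensional invariant subspaces and reflections through the origin on 1-dimensional invariant subspaces, with rotation angles θ_i ∈ (0, π] (assigning angle π to the 1-dimensional pieces). Then for any unit vector x, the inner product ⟨x, w(x)⟩ is at most cos(θ_min), where θ_min is the minimum of the angles θ_i, with equality if and only if x lies in the sum of the invariant subspaces realizing the minimal angle. -/
import Mathlib


open RealInnerProductSpace

/-- If an orthogonal transformation `w` of `ℝⁿ` decomposes orthogonally into invariant
subspaces of dimension 1 or 2, acting on each piece `V i` with
`⟪v, w v⟫ = cos (θ i) * ‖v‖²` where `θ i ∈ (0, π]` (rotation by `θ i` on 2-dimensional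
pieces, `-id` i.e. angle `π` on 1-dimensional pieces), then for every unit vector `x`
we have `⟪x, w x⟫ ≤ cos θmin`, with equality iff `x` lies in the sum of the pieces
realizing the minimal angle. -/
theorem stmt0 {n k : ℕ}
    (w : EuclideanSpace ℝ (Fin n) →ₗ[ℝ] EuclideanSpace ℝ (Fin n))
    (hw : ∀ v, ‖w v‖ = ‖v‖)
    (V : Fin (k + 1) → Submodule ℝ (EuclideanSpace ℝ (Fin n)))
    (θ : Fin (k + 1) → ℝ)
    (hθ : ∀ i, θ i ∈ Set.Ioc (0 : ℝ) Real.pi)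
    (hdim : ∀ i, Module.finrank ℝ (V i) = 1 ∨ Module.finrank ℝ (V i) = 2)
    (horth : ∀ i j, i ≠ j → ∀ u ∈ V i, ∀ v ∈ V j, ⟪u, v⟫ = 0)
    (hinv : ∀ i, ∀ v ∈ V i, w v ∈ V i)
    (hspan : (⨆ i, V i) = ⊤)
    (hangle : ∀ i, ∀ v ∈ V i, ⟪v, w v⟫ = Real.cos (θ i) * ‖v‖ ^ 2)
    (x : EuclideanSpace ℝ (Fin n)) (hx : ‖x‖ = 1) :
    ⟪x, w x⟫ ≤ Real.cos (Finset.univ.inf' Finset.univ_nonempty θ) ∧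
      (⟪x, w x⟫ = Real.cos (Finset.univ.inf' Finset.univ_nonempty θ) ↔
        x ∈ ⨆ i ∈ {i | θ i = Finset.univ.inf' Finset.univ_nonempty θ}, V i) := by
  classical
  set m := Finset.univ.inf' Finset.univ_nonempty θ with hm
  obtain ⟨i₀, -, hi₀⟩ := Finset.exists_mem_eq_inf' (Finset.univ_nonempty) θ
  have hm_mem : m ∈ Set.Ioc (0 : ℝ) Real.pi := by rw [hm, hi₀]; exact hθ i₀
  have hm_le : ∀ i, m ≤ θ i := fun i => Finset.inf'_le θ (Finset.mem_univ i)
  -- key computation : for any decomposition x = ∑ c i with c i ∈ V i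
  have key : ∀ c : Fin (k + 1) → EuclideanSpace ℝ (Fin n), (∀ i, c i ∈ V i) → x = ∑ i, c i →
      ⟪x, w x⟫ = ∑ i, Real.cos (θ i) * ‖c i‖ ^ 2 ∧ ∑ i, ‖c i‖ ^ 2 = 1 := by
    intro c hc hxc
    constructor
    · rw [hxc, map_sum, sum_inner]
      refine Finset.sum_congr rfl fun i _ => ?_
      rw [inner_sum, Finset.sum_eq_single i]
      · exact hangle i (c i) (hc i)
      · intro j _ hji
        exact horth i j hji.symm (c i) (hc i) (w (c j)) (hinv j (c j) (hc j))
      · simp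
    · have : (1 : ℝ) = ⟪x, x⟫ := by
        rw [real_inner_self_eq_norm_sq, hx]; norm_num
      rw [this, hxc, sum_inner]
      refine (Finset.sum_congr rfl fun i _ => ?_).symm
      rw [inner_sum, Finset.sum_eq_single i]
      · rw [real_inner_self_eq_norm_sq]
      · intro j _ hji
        exact horth i j hji.symm (c i) (hc i) (c j) (hc j)
      · simp
  -- get a decomposition of x
  have hx_top : x ∈ ⨆ i, V i := hspan ▸ Submodule.mem_top
  obtain ⟨f, hf, hfx⟩ := (Submodule.mem_iSup_iff_exists_finsupp V x).mp hx_top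
  have hfx' : x = ∑ i, f i := by
    rw [← hfx, Finsupp.sum_fintype]; intro i; rfl
  obtain ⟨hkey1, hkey2⟩ := key (fun i => f i) hf hfx'
  -- termwise bound
  have hterm : ∀ i, Real.cos (θ i) * ‖f i‖ ^ 2 ≤ Real.cos m * ‖f i‖ ^ 2 := by
    intro i
    have : Real.cos (θ i) ≤ Real.cos m :=
      Real.cos_le_cos_of_nonneg_of_le_pi hm_mem.1.le (hθ i).2 (hm_le i)
    exact mul_le_mul_of_nonneg_right this (sq_nonneg _)
  have hle : ⟪x, w x⟫ ≤ Real.cos m := by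
    calc ⟪x, w x⟫ = ∑ i, Real.cos (θ i) * ‖f i‖ ^ 2 := hkey1
    _ ≤ ∑ i, Real.cos m * ‖f i‖ ^ 2 := Finset.sum_le_sum fun i _ => hterm i
    _ = Real.cos m := by rw [← Finset.mul_sum, hkey2, mul_one]
  refine ⟨hle, ?_, ?_⟩
  · -- equality → membership
    intro heq
    have hsum0 : ∑ i, (Real.cos m * ‖f i‖ ^ 2 - Real.cos (θ i) * ‖f i‖ ^ 2) = 0 := by
      rw [Finset.sum_sub_distrib, ← Finset.mul_sum, hkey2, mul_one, ← hkey1, heq, sub_self]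
    have hall0 := (Finset.sum_eq_zero_iff_of_nonneg
      (fun i _ => sub_nonneg.mpr (hterm i))).mp hsum0
    have hzero : ∀ i, θ i ≠ m → f i = 0 := by
      intro i hne
      have hlt : Real.cos (θ i) < Real.cos m :=
        Real.cos_lt_cos_of_nonneg_of_le_pi hm_mem.1.le (hθ i).2
          (lt_of_le_of_ne (hm_le i) (Ne.symm hne))
      have := hall0 i (Finset.mem_univ i)
      have h2 : (Real.cos m - Real.cos (θ i)) * ‖f i‖ ^ 2 = 0 := by ring_nf; linarith [this]
      rcases mul_eq_zero.mp h2 with h | h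
      · linarith
      · simpa using (pow_eq_zero_iff (by norm_num)).mp h
    rw [hfx']
    refine Submodule.sum_mem _ fun i _ => ?_
    by_cases hi : θ i = m
    · exact Submodule.mem_iSup_of_mem i (Submodule.mem_iSup_of_mem hi (hf i))
    · rw [hzero i hi]; exact Submodule.zero_mem _
  · -- membership → equality
    intro hmem
    have hrw : (⨆ i ∈ {i | θ i = m}, V i) = ⨆ i, (if θ i = m then V i else ⊥) := by
      refine iSup_congr fun i => ?_
      by_cases hi : θ i = m
      · simp [hi, Set.mem_setOf_eq]
      · simp [hi, Set.mem_setOf_eq]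
    rw [hrw] at hmem
    obtain ⟨g, hg, hgx⟩ := (Submodule.mem_iSup_iff_exists_finsupp _ x).mp hmem
    have hgx' : x = ∑ i, g i := by
      rw [← hgx, Finsupp.sum_fintype]; intro i; rfl
    have hgV : ∀ i, g i ∈ V i := by
      intro i
      have := hg i
      by_cases hi : θ i = m
      · simpa [hi] using this
      · simp only [hi, if_false, Submodule.mem_bot] at this
        rw [this]; exact Submodule.zero_mem _
    obtain ⟨hk1, hk2⟩ := key (fun i => g i) hgV hgx'
    have hterm' : ∀ i, Real.cos (θ i) * ‖g i‖ ^ 2 = Real.cos m * ‖g i‖ ^ 2 := by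
      intro i
      by_cases hi : θ i = m
      · rw [hi]
      · have := hg i
        simp only [hi, if_false, Submodule.mem_bot] at this
        simp [this]
    rw [hk1, Finset.sum_congr rfl (fun i _ => hterm' i), ← Finset.mul_sum, hk2, mul_one]
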